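/- Let e' = (0̄, 1) denote the element of IS_m ≀_p IS_n whose second component is the identity map of N_n and whose first component 0̄ sends every x ∈ N_n to the empty partial map 0 of IS_m. Then every R-cross-section of IS_m ≀_p IS_n contains e', and every semigroup isomorphism φ: R' → R'' between R-cross-sections of IS_m ≀_p IS_n satisfies φ(e') = e'. -/

import Mathlib

open scoped Classical

/-- `IS n` is the full inverse symmetric semigroup: all partial bijections of `Fin n`;
multiplication is composition of partial maps (maps acting on the right). -/
abbrev IS (n : ℕ) : Type := PEquiv (Fin n) (Fin n)

noncomputable section
namespace ISW

instance {n : ℕ} : Mul (IS n) := ⟨PEquiv.trans⟩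
instance {n : ℕ} : One (IS n) := ⟨PEquiv.refl _⟩

/-- The domain of a partial bijection. -/
def pdom {n : ℕ} (f : IS n) : Set (Fin n) := {x | (f x).isSome}

/-- The range of a partial bijection. -/
def pran {n : ℕ} (f : IS n) : Set (Fin n) := {y | (f.symm y).isSome}

/-- Green's R-relation on a semigroup (with identity): `u R v` iff `uS = vS`. -/
def GreenR {S : Type*} [Mul S] (u v : S) : Prop :=
  {w | ∃ s, w = u * s} = {w | ∃ s, w = v * s}

/-- Green's L-relation on a semigroup (with identity): `u L v` iff `Su = Sv`. -/
def GreenL {S : Type*} [Mul S] (u v : S) : Prop :=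
  {w | ∃ s, w = s * u} = {w | ∃ s, w = s * v}

/-- An R-cross-section: a subsemigroup containing exactly one element of every
Green R-class. -/
def IsRCrossSection {S : Type*} [Mul S] (T : Set S) : Prop :=
  (∀ a ∈ T, ∀ b ∈ T, a * b ∈ T) ∧ ∀ x : S, ∃! t, t ∈ T ∧ GreenR x t

/-- An L-cross-section: a subsemigroup containing exactly one element of every
Green L-class. -/
def IsLCrossSection {S : Type*} [Mul S] (T : Set S) : Prop :=
  (∀ a ∈ T, ∀ b ∈ T, a * b ∈ T) ∧ ∀ x : S, ∃! t, t ∈ T ∧ GreenL x t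

/-- `φ` realizes a semigroup isomorphism from `T₁` onto `T₂`. -/
def IsSemiIso {S₁ S₂ : Type*} [Mul S₁] [Mul S₂] (T₁ : Set S₁) (T₂ : Set S₂)
    (φ : S₁ → S₂) : Prop :=
  Set.BijOn φ T₁ T₂ ∧ ∀ a ∈ T₁, ∀ b ∈ T₁, φ (a * b) = φ a * φ b

/-- The partial wreath product `IS m ≀_p IS n`: pairs `(f, a)` with `a ∈ IS n` and
`f` a partial map from `Fin n` to `IS m` whose domain equals the domain of `a`. -/
structure PW (m n : ℕ) where
  base : IS n
  fib : Fin n → Option (IS m)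
  dom_eq : ∀ x, (fib x).isSome ↔ (base x).isSome

/-- Multiplication of the partial wreath product: `(f,a)·(g,b) = (f g^a, ab)`. -/
instance {m n : ℕ} : Mul (PW m n) where
  mul u v :=
    { base := u.base * v.base
      fib := fun x => Option.map₂ (· * ·) (u.fib x) ((u.base x).bind v.fib)
      dom_eq := by
        intro x
        show _ ↔ (((u.base x).bind v.base)).isSome
        cases h : u.base x with
        | none =>
          have : u.fib x = none := by
            have := (u.dom_eq x)
            simp [h] at this
            simpa using Option.not_isSome_iff_eq_none.mp (by simp [this])
          simp [h, this, Option.map₂]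
        | some y =>
          have hf : (u.fib x).isSome := (u.dom_eq x).mpr (by simp [h])
          obtain ⟨s, hs⟩ := Option.isSome_iff_exists.mp hf
          cases h2 : v.base y with
          | none =>
            have : v.fib y = none := by
              have := (v.dom_eq y)
              simp [h2] at this
              simpa using Option.not_isSome_iff_eq_none.mp (by simp [this])
            simp [h, h2, hs, this, Option.map₂]
          | some z =>
            have hg : (v.fib y).isSome := (v.dom_eq y).mpr (by simp [h2])
            obtain ⟨t, ht⟩ := Option.isSome_iff_exists.mp hg
            simp [h, h2, hs, ht, Option.map₂] }

/-- The identity of the partial wreath product. -/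
instance {m n : ℕ} : One (PW m n) where
  one :=
    { base := 1
      fib := fun _ => some 1
      dom_eq := by intro x; simp; rfl }

/-- `chainFun L j x`: with `L` listing the elements of a block in increasing order and
`0 ≤ j < |L|` (`j` is the 0-based version of the paper's index), this is the value at `x` of
the chain `a_{i,j}`: the partial bijection with domain everything except `L[j]`,
sending `L[l] ↦ L[l+1]` for `l < j` and fixing all other points. -/
def chainFun {n : ℕ} (L : List (Fin n)) (j : ℕ) (x : Fin n) : Option (Fin n) :=
  if x ∈ L then
    if L.idxOf x = j then none
    else if L.idxOf x < j then L[L.idxOf x + 1]?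
    else some x
  else some x

/-- The generators `a_{i,j}` attached to an ordered decomposition with blocks `B i`. -/
def RGens {n s : ℕ} (B : Fin s → List (Fin n)) : Set (IS n) :=
  {a : IS n | ∃ i : Fin s, ∃ j : ℕ, j < (B i).length ∧ ∀ x, a x = chainFun (B i) j x}

/-- `R(M⃗₁, …, M⃗ₛ)`: the subsemigroup of `IS n` generated by the chains `a_{i,j}`
together with the identity map. -/
def RSec {n s : ℕ} (B : Fin s → List (Fin n)) : Set (IS n) :=
  (Subsemigroup.closure (RGens B ∪ {1}) : Subsemigroup (IS n))

/-- A decomposition of `Fin n` into disjoint nonempty blocks, each block equipped with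
a linear order, recorded by listing the elements of each block in increasing order. -/
structure OrderedPartition (n s : ℕ) where
  B : Fin s → List (Fin n)
  nonempty : ∀ i, B i ≠ []
  nodup : ∀ i, (B i).Nodup
  disjoint : ∀ i j, i ≠ j → ∀ x, x ∈ B i → x ∉ B j
  cover : ∀ x, ∃ i, x ∈ B i

/-- The chain `a_{i,j}` of the block listed by `L`, viewed inside `IS(M_i)`, i.e. embedded
into `IS n` as a partial bijection whose domain is contained in the block: it is defined on
`L` minus `L[j]`, sends `L[l] ↦ L[l+1]` for `l < j` and fixes the other points of `L`. -/
def chainFunB {n : ℕ} (L : List (Fin n)) (j : ℕ) (x : Fin n) : Option (Fin n) :=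
  if x ∈ L then
    if L.idxOf x = j then none
    else if L.idxOf x < j then L[L.idxOf x + 1]?
    else some x
  else none

/-- The generators of `R(M⃗)` inside `IS(M)` (embedded in `IS n`), `M` listed by `L`. -/
def BlockGens {n : ℕ} (L : List (Fin n)) : Set (IS n) :=
  {a : IS n | ∃ j : ℕ, j < L.length ∧ ∀ x, a x = chainFunB L j x}

/-- The identity of `IS(M)` (embedded in `IS n`): the identity map of the block listed by `L`. -/
def idOn {n : ℕ} (L : List (Fin n)) : Set (IS n) :=
  {a : IS n | ∀ x, a x = if x ∈ L then some x else none}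

/-- The R-cross-section `R(M⃗)` of `IS(M)`, embedded into `IS n`, for the block listed by `L`. -/
def RSecBlock {n : ℕ} (L : List (Fin n)) : Set (IS n) :=
  (Subsemigroup.closure (BlockGens L ∪ idOn L) : Subsemigroup (IS n))

/-- The wreath product `R_i ≀_p R(M⃗_i)` where `R(M⃗_i) ⊆ IS(M_i)`, `M_i` listed by `L`,
and `R_i = T ⊆ IS m`, realized inside `PW m n` via the natural embedding
`IS m ≀_p IS(M_i) ⊆ IS m ≀_p IS n`. -/
def WBlock (m n : ℕ) (L : List (Fin n)) (T : Set (IS m)) : Set (PW m n) :=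
  {u : PW m n | u.base ∈ RSecBlock L ∧ ∀ x f, u.fib x = some f → f ∈ T}

/-- The element `e' = (0̄, 1)` of `IS m ≀_p IS n`: the second component is the identity of
`IS n` and the first component sends every point to the empty map `0` of `IS m`. -/
def ezero (m n : ℕ) : PW m n where
  base := 1
  fib := fun _ => some ⊥
  dom_eq := by intro x; simp; rfl


/-!
The elements `(0̄, a)` form a two-sided ideal of `IS m ≀_p IS n` on which `e' = (0̄, 1)` is a
two-sided identity. In an R-cross-section `T`, the representative of the R-class of `e'` is
`e' s = (0̄, b)` with `b` total; it is R-equivalent to its square, hence idempotent, and an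
idempotent with a right inverse is `1`, so the representative is `e'`.

For an isomorphism `φ`, being an idempotent `e` with `e v = 0 → v = 0` on the cross-section is
preserved in both directions, and `e'` has this property. Such an `e` has base `1`: its base is
an idempotent partial bijection, so it fixes its range, and a point missing from the range would
make `e` kill the representative with domain that point. Hence both `φ e'` and `u = φ⁻¹ e'` have
base `1`, and `φ e' = φ (e' u) = φ e' · e' = e'`.
-/

section Green

variable {M : Type*}

lemma greenR_iff [Monoid M] {u v : M} :
    GreenR u v ↔ (∃ s, v = u * s) ∧ ∃ s, u = v * s := by
  refine ⟨fun h => ⟨?_, ?_⟩, fun ⟨⟨s, hs⟩, ⟨t, ht⟩⟩ => ?_⟩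
  · have hv : v ∈ {w | ∃ s, w = v * s} := ⟨1, (mul_one v).symm⟩
    rwa [← h] at hv
  · have hu : u ∈ {w | ∃ s, w = u * s} := ⟨1, (mul_one u).symm⟩
    rwa [h] at hu
  · ext w
    constructor
    · rintro ⟨r, rfl⟩
      exact ⟨t * r, by rw [ht, mul_assoc]⟩
    · rintro ⟨r, rfl⟩
      exact ⟨s * r, by rw [hs, mul_assoc]⟩

lemma IsRCrossSection.exists_greenR [Mul M] {T : Set M} (hT : IsRCrossSection T) (x : M) :
    ∃ t ∈ T, GreenR x t :=
  (hT.2 x).exists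

lemma IsRCrossSection.eq_of_greenR [Mul M] {T : Set M} (hT : IsRCrossSection T) {a b : M}
    (ha : a ∈ T) (hb : b ∈ T) (h : GreenR a b) : a = b :=
  (hT.2 a).unique ⟨ha, rfl⟩ ⟨hb, h⟩

lemma IsRCrossSection.zero_mem [MonoidWithZero M] {T : Set M} (hT : IsRCrossSection T) :
    (0 : M) ∈ T := by
  obtain ⟨t, htT, h⟩ := hT.exists_greenR 0
  obtain ⟨⟨s, rfl⟩, -⟩ := greenR_iff.1 h
  rwa [zero_mul] at htT

end Green

section SemiIso

variable {M₁ M₂ : Type*} [MulZeroClass M₁] [MulZeroClass M₂] {T₁ : Set M₁} {T₂ : Set M₂}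
  {φ : M₁ → M₂}

lemma IsSemiIso.map_zero (hφ : IsSemiIso T₁ T₂ φ) (h₁ : (0 : M₁) ∈ T₁) (h₂ : (0 : M₂) ∈ T₂) :
    φ 0 = 0 := by
  obtain ⟨u, hu, hφu⟩ := hφ.1.surjOn h₂
  calc φ 0 = φ (0 * u) := by rw [zero_mul]
    _ = 0 := by rw [hφ.2 0 h₁ u hu, hφu, mul_zero]

def IsFaithfulIdempotent {M : Type*} [MulZeroClass M] (T : Set M) (e : M) : Prop :=
  IsIdempotentElem e ∧ ∀ v ∈ T, e * v = 0 → v = 0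

lemma IsSemiIso.isFaithfulIdempotent_iff (hφ : IsSemiIso T₁ T₂ φ)
    (hT₁ : ∀ a ∈ T₁, ∀ b ∈ T₁, a * b ∈ T₁) (h₀ : (0 : M₁) ∈ T₁) (hφ₀ : φ 0 = 0)
    {e : M₁} (he : e ∈ T₁) :
    IsFaithfulIdempotent T₁ e ↔ IsFaithfulIdempotent T₂ (φ e) := by
  obtain ⟨⟨hmaps, hinj, hsurj⟩, hmul⟩ := hφ
  constructor
  · rintro ⟨hidem, hfaith⟩
    refine ⟨by rw [IsIdempotentElem, ← hmul e he e he, hidem], fun w hw hew => ?_⟩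
    obtain ⟨v, hv, rfl⟩ := hsurj hw
    have hev : e * v = 0 := hinj (hT₁ e he v hv) h₀ (by rw [hmul e he v hv, hew, hφ₀])
    rw [hfaith v hv hev, hφ₀]
  · rintro ⟨hidem, hfaith⟩
    refine ⟨hinj (hT₁ e he e he) he (by rw [hmul e he e he, hidem]), fun v hv hev => ?_⟩
    have hφv : φ v = 0 := hfaith (φ v) (hmaps hv) (by rw [← hmul e he v hv, hev, hφ₀])
    exact hinj hv h₀ (hφv.trans hφ₀.symm)

end SemiIso

instance {n : ℕ} : Monoid (IS n) where
  mul_assoc := PEquiv.trans_assoc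
  one_mul := PEquiv.refl_trans
  mul_one := PEquiv.trans_refl

lemma IS.mul_apply {n : ℕ} (a b : IS n) (x : Fin n) : (a * b) x = (a x).bind b := rfl

lemma PEquiv.eq_refl_of_trans_self {α : Type*} {b : α ≃. α} (hb : b.trans b = b)
    (hsurj : ∀ y, ∃ x, b x = some y) : b = PEquiv.refl α := by
  ext y z
  obtain ⟨x, hx⟩ := hsurj y
  have hy : b y = some y :=
    calc b y = (b x).bind b := by rw [hx]; rfl
      _ = b x := DFunLike.congr_fun hb x
      _ = some y := hx
  simp [hy]

lemma pdom_mul_subset {n : ℕ} (a b : IS n) : pdom (a * b) ⊆ pdom a := by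
  intro x hx
  cases ha : a x with
  | none => simp [pdom, ha, IS.mul_apply] at hx
  | some y => simp [pdom, ha]

attribute [ext] PW

namespace PW

variable {m n : ℕ}

lemma base_mul (u v : PW m n) : (u * v).base = u.base * v.base := rfl

lemma fib_mul (u v : PW m n) (x : Fin n) :
    (u * v).fib x = Option.map₂ (· * ·) (u.fib x) ((u.base x).bind v.fib) := rfl

lemma fib_eq_none {u : PW m n} {x : Fin n} (h : u.base x = none) : u.fib x = none := by
  simpa [h] using u.dom_eq x

instance : Monoid (PW m n) where
  mul_assoc u v w := by
    ext1
    · exact mul_assoc u.base v.base w.base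
    funext x
    cases hx : u.base x with
    | none => simp [fib_mul, base_mul, IS.mul_apply, hx]
    | some y =>
      simp only [fib_mul, base_mul, IS.mul_apply, hx, Option.bind_some]
      exact Option.map₂_assoc mul_assoc
  one_mul u := by
    ext1
    · exact one_mul u.base
    funext x
    show Option.map₂ _ (some 1) (u.fib x) = _
    cases u.fib x <;> simp
  mul_one u := by
    ext1
    · exact mul_one u.base
    funext x
    show Option.map₂ _ (u.fib x) ((u.base x).bind fun _ => some 1) = _
    cases hx : u.base x with
    | none => simp [fib_eq_none hx]
    | some y => cases u.fib x <;> simp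

lemma exists_fib_eq_some {u : PW m n} {x y : Fin n} (h : u.base x = some y) :
    ∃ g, u.fib x = some g :=
  Option.isSome_iff_exists.mp ((u.dom_eq x).2 (by simp [h]))

/-- The element `(0̄, a)`. -/
def ofBase (a : IS n) : PW m n where
  base := a
  fib x := (a x).map fun _ => ⊥
  dom_eq x := by simp

instance : Zero (PW m n) := ⟨ofBase ⊥⟩

lemma eq_zero_of_base_eq_bot {u : PW m n} (h : u.base = ⊥) : u = 0 := by
  ext1
  · exact h
  funext x
  have hx : u.base x = none := by simp [h]
  simp [fib_eq_none hx, show (0 : PW m n) = ofBase ⊥ from rfl, ofBase]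

instance : MonoidWithZero (PW m n) where
  zero_mul _ := eq_zero_of_base_eq_bot (PEquiv.bot_trans _)
  mul_zero _ := eq_zero_of_base_eq_bot (PEquiv.trans_bot _)

lemma pdom_base_eq_of_greenR {u v : PW m n} (h : GreenR u v) : pdom u.base = pdom v.base := by
  obtain ⟨⟨s, rfl⟩, ⟨s', hs'⟩⟩ := greenR_iff.1 h
  have hsub := pdom_mul_subset (u * s).base s'.base
  rw [← base_mul, ← hs'] at hsub
  exact hsub.antisymm (pdom_mul_subset _ _)

end PW

open PW

section

variable {m n : ℕ}

lemma ofBase_one : ofBase 1 = ezero m n := rfl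

lemma ezero_mul (u : PW m n) : ezero m n * u = ofBase u.base := by
  ext1
  · exact one_mul u.base
  funext x
  show Option.map₂ _ (some ⊥) (u.fib x) = (u.base x).map _
  cases hx : u.base x with
  | none => simp [fib_eq_none hx]
  | some y =>
    obtain ⟨g, hg⟩ := exists_fib_eq_some hx
    simp only [hg, Option.map₂_some_some]
    exact congrArg some (PEquiv.bot_trans g)

lemma mul_ezero (u : PW m n) : u * ezero m n = ofBase u.base := by
  ext1
  · exact mul_one u.base
  funext x
  show Option.map₂ _ (u.fib x) ((u.base x).bind fun _ => some ⊥) = (u.base x).map _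
  cases hx : u.base x with
  | none => simp [fib_eq_none hx]
  | some y =>
    obtain ⟨g, hg⟩ := exists_fib_eq_some hx
    simp only [hg, Option.bind_some, Option.map₂_some_some, Option.map_some]
    exact congrArg some (PEquiv.trans_bot g)

theorem ezero_mem {T : Set (PW m n)} (hT : IsRCrossSection T) : ezero m n ∈ T := by
  obtain ⟨t, htT, h⟩ := hT.exists_greenR (ezero m n)
  obtain ⟨⟨s, rfl⟩, ⟨s', hs'⟩⟩ := greenR_iff.1 h
  rw [ezero_mul] at htT hs'
  set b := s.base
  have hidem : ofBase b * ofBase b = (ofBase b : PW m n) := by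
    refine hT.eq_of_greenR (hT.1 _ htT _ htT) htT (greenR_iff.2 ⟨⟨s', ?_⟩, ⟨ofBase b, rfl⟩⟩)
    rw [mul_assoc, ← hs', mul_ezero]
    rfl
  have hinv : b * s'.base = 1 := (congrArg PW.base hs').symm
  have hb : b = 1 :=
    calc b = b * (b * s'.base) := by rw [hinv, mul_one]
      _ = b * s'.base := by rw [← mul_assoc, show b * b = b from congrArg PW.base hidem]
      _ = 1 := hinv
  rwa [hb, ofBase_one] at htT

lemma isFaithfulIdempotent_ezero (T : Set (PW m n)) : IsFaithfulIdempotent T (ezero m n) := by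
  refine ⟨by rw [IsIdempotentElem, ezero_mul]; rfl, fun v _ h => eq_zero_of_base_eq_bot ?_⟩
  rw [ezero_mul] at h
  exact congrArg PW.base h

lemma base_eq_one_of_isFaithfulIdempotent {T : Set (PW m n)} (hT : IsRCrossSection T)
    {e : PW m n} (he : IsFaithfulIdempotent T e) : e.base = 1 := by
  refine PEquiv.eq_refl_of_trans_self (congrArg PW.base he.1) fun y => ?_
  by_contra! hy
  obtain ⟨t, htT, hwt⟩ := hT.exists_greenR (ofBase (PEquiv.single y y) : PW m n)
  have hdom : pdom t.base = {y} := by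
    rw [← pdom_base_eq_of_greenR hwt]
    ext x
    rcases eq_or_ne x y with rfl | hxy
    · simp [pdom, ofBase]
    · simp [pdom, ofBase, hxy, PEquiv.single_apply_of_ne hxy.symm]
  have het : e * t = 0 := eq_zero_of_base_eq_bot <| PEquiv.ext fun x => by
    rw [base_mul, IS.mul_apply]
    cases hx : e.base x with
    | none => rfl
    | some z =>
      have hz : z ∉ pdom t.base := by
        rw [hdom]
        rintro rfl
        exact hy x hx
      simpa [pdom] using hz
  have hyt : y ∈ pdom t.base := hdom ▸ rfl
  rw [he.2 t htT het] at hyt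
  simp [pdom, show (0 : PW m n).base = ⊥ from rfl] at hyt

end

/-- the element `e' = (0̄, 1)` belongs to every R-cross-section of
`IS m ≀_p IS n`, and every isomorphism of R-cross-sections of `IS m ≀_p IS n` fixes it. -/
theorem ezero_mem_and_fixed (m n : ℕ) :
    (∀ T : Set (PW m n), IsRCrossSection T → ezero m n ∈ T) ∧
    (∀ (R' R'' : Set (PW m n)) (φ : PW m n → PW m n),
      IsRCrossSection R' → IsRCrossSection R'' → IsSemiIso R' R'' φ →
      φ (ezero m n) = ezero m n) := by
  refine ⟨fun T hT => ezero_mem hT, fun R' R'' φ hR' hR'' hφ => ?_⟩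
  have hφ₀ : φ 0 = 0 := hφ.map_zero hR'.zero_mem hR''.zero_mem
  have hiff := fun {e} (he : e ∈ R') => hφ.isFaithfulIdempotent_iff hR'.1 hR'.zero_mem hφ₀ he
  obtain ⟨u, hu, hφu⟩ := hφ.1.surjOn (ezero_mem hR'')
  have hf : (φ (ezero m n)).base = 1 := base_eq_one_of_isFaithfulIdempotent hR''
    ((hiff (ezero_mem hR')).1 (isFaithfulIdempotent_ezero R'))
  have hu₁ : u.base = 1 := base_eq_one_of_isFaithfulIdempotent hR'
    ((hiff hu).2 (hφu ▸ isFaithfulIdempotent_ezero R''))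
  calc φ (ezero m n) = φ (ezero m n * u) := by rw [ezero_mul, hu₁, ofBase_one]
    _ = φ (ezero m n) * ezero m n := by rw [hφ.2 _ (ezero_mem hR') _ hu, hφu]
    _ = ezero m n := by rw [mul_ezero, hf, ofBase_one]

end ISW
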